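/- For all positive integers n and k with 1 ≤ k ≤ n and real α ∈ (0,1), the generalized Stirling number S_α(n,k) := (1/(α^k k!)) ∑_{j=1}^{k} (-1)^j C(k,j) (-jα)_n is strictly positive, where (x)_n = x(x+1)⋯(x+n-1) is the Pochhammer symbol. -/

import Mathlib

open Finset

/-- Rising factorial (Pochhammer symbol) `(x)_n = x(x+1)⋯(x+n-1)`. -/
noncomputable def risingFactorial (x : ℝ) (n : ℕ) : ℝ :=
  ∏ i ∈ Finset.range n, (x + i)

/-- Generalized Stirling number of the second kind
`S_α(n,k) = (1/(α^k k!)) ∑_{j=1}^k (-1)^j C(k,j) (-jα)_n`. -/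
noncomputable def genStirling (α : ℝ) (n k : ℕ) : ℝ :=
  (1 / (α ^ k * (Nat.factorial k : ℝ))) *
    ∑ j ∈ Finset.Icc 1 k, (-1 : ℝ) ^ j * (Nat.choose k j : ℝ) *
      risingFactorial (-(j * α)) n

/-!
Adding the term `j = 0`, which is `(0)_n = 0` for `n ≥ 1`, turns `S_α` into a triangle with
`S(0, k) = δ₀ₖ` and `S(n+1, k+1) = S(n, k) + (n - (k+1)α) S(n, k+1)`. By induction on `n` the
entries above the diagonal vanish and the diagonal entries are `1`; below the diagonal the
coefficient `n - (k+1)α` is positive when `α < 1`, which propagates positivity from row `n`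
to row `n + 1`.
-/

lemma risingFactorial_zero (x : ℝ) : risingFactorial x 0 = 1 := by
  simp [risingFactorial]

lemma risingFactorial_succ (x : ℝ) (n : ℕ) :
    risingFactorial x (n + 1) = risingFactorial x n * (x + n) := by
  simp [risingFactorial, prod_range_succ]

lemma risingFactorial_zero_left {n : ℕ} (hn : n ≠ 0) : risingFactorial 0 n = 0 :=
  prod_eq_zero (i := 0) (mem_range.2 (Nat.pos_of_ne_zero hn)) (by simp)

lemma risingFactorial_nonneg {x : ℝ} (hx : 0 ≤ x) (n : ℕ) : 0 ≤ risingFactorial x n :=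
  prod_nonneg fun i _ => by positivity

noncomputable def genStirlingNum (α : ℝ) (n k : ℕ) : ℝ :=
  ∑ j ∈ range (k + 1), (-1 : ℝ) ^ j * (k.choose j : ℝ) * risingFactorial (-(j * α)) n

noncomputable def genStirlingFull (α : ℝ) (n k : ℕ) : ℝ :=
  genStirlingNum α n k / (α ^ k * k.factorial)

lemma genStirling_eq_genStirlingFull (α : ℝ) {n : ℕ} (hn : n ≠ 0) (k : ℕ) :
    genStirling α n k = genStirlingFull α n k := by
  rw [genStirling, genStirlingFull, genStirlingNum, one_div_mul_eq_div, range_eq_Ico,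
    sum_eq_sum_Ico_succ_bot (by omega : 0 < k + 1), zero_add, Ico_add_one_right_eq_Icc]
  simp [risingFactorial_zero_left hn]

lemma cast_choose_succ_mul_sub {k j : ℕ} (hj : j ≤ k + 1) :
    ((k + 1).choose j : ℝ) * (k + 1 - j) = (k + 1) * k.choose j := by
  have h := congrArg (Nat.cast : ℕ → ℝ) (Nat.choose_mul_succ_eq k j)
  push_cast [Nat.cast_sub hj] at h
  linarith

-- Split `-jα + n = (n - (k+1)α) + (k+1-j)α` in `(-jα)_{n+1} = (-jα)_n (-jα + n)`.
lemma genStirlingNum_succ_succ (α : ℝ) (n k : ℕ) :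
    genStirlingNum α (n + 1) (k + 1) =
      α * (k + 1) * genStirlingNum α n k + (n - (k + 1) * α) * genStirlingNum α n (k + 1) := by
  have hextend : genStirlingNum α n k = ∑ j ∈ range (k + 2),
      (-1 : ℝ) ^ j * (k.choose j : ℝ) * risingFactorial (-(j * α)) n := by
    simp [genStirlingNum, sum_range_succ _ (k + 1)]
  rw [hextend, genStirlingNum, genStirlingNum, mul_sum, mul_sum, ← sum_add_distrib]
  refine sum_congr rfl fun j hj => ?_
  have hchoose := cast_choose_succ_mul_sub (Nat.lt_succ_iff.1 (mem_range.1 hj))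
  rw [risingFactorial_succ]
  linear_combination α * (-1 : ℝ) ^ j * risingFactorial (-(j * α)) n * hchoose

lemma genStirlingFull_zero_right (α : ℝ) (n : ℕ) :
    genStirlingFull α n 0 = risingFactorial 0 n := by
  simp [genStirlingFull, genStirlingNum]

lemma genStirlingFull_zero_zero (α : ℝ) : genStirlingFull α 0 0 = 1 := by
  rw [genStirlingFull_zero_right, risingFactorial_zero]

lemma genStirlingFull_zero_left (α : ℝ) {k : ℕ} (hk : k ≠ 0) : genStirlingFull α 0 k = 0 := by
  have h := congrArg (Int.cast : ℤ → ℝ) (Int.alternating_sum_range_choose_of_ne hk)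
  push_cast at h
  simp [genStirlingFull, genStirlingNum, risingFactorial_zero, h]

lemma genStirlingFull_succ_succ {α : ℝ} (hα : α ≠ 0) (n k : ℕ) :
    genStirlingFull α (n + 1) (k + 1) =
      genStirlingFull α n k + (n - (k + 1) * α) * genStirlingFull α n (k + 1) := by
  simp only [genStirlingFull, genStirlingNum_succ_succ, Nat.factorial_succ, pow_succ]
  push_cast
  field_simp

lemma genStirlingFull_eq_zero_of_lt {α : ℝ} (hα : α ≠ 0) {n k : ℕ} (h : n < k) :
    genStirlingFull α n k = 0 := by
  induction n generalizing k with
  | zero => exact genStirlingFull_zero_left α h.ne'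
  | succ n ih =>
    obtain ⟨k, rfl⟩ := Nat.exists_eq_add_one_of_ne_zero (by omega : k ≠ 0)
    rw [genStirlingFull_succ_succ hα, ih (by omega), ih (by omega), mul_zero, add_zero]

lemma genStirlingFull_self {α : ℝ} (hα : α ≠ 0) (n : ℕ) : genStirlingFull α n n = 1 := by
  induction n with
  | zero => exact genStirlingFull_zero_zero α
  | succ n ih =>
    rw [genStirlingFull_succ_succ hα, ih, genStirlingFull_eq_zero_of_lt hα n.lt_succ_self,
      mul_zero, add_zero]

lemma genStirlingFull_nonneg {α : ℝ} (hα0 : α ≠ 0) (hα1 : α ≤ 1) (n k : ℕ) :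
    0 ≤ genStirlingFull α n k := by
  induction n generalizing k with
  | zero =>
    rcases k with _ | k
    · rw [genStirlingFull_zero_zero]; exact zero_le_one
    · rw [genStirlingFull_zero_left α k.succ_ne_zero]
  | succ n ih =>
    rcases k with _ | k
    · rw [genStirlingFull_zero_right]; exact risingFactorial_nonneg le_rfl _
    rw [genStirlingFull_succ_succ hα0]
    rcases le_or_gt (k + 1) n with hkn | hnk
    · have hcoeff : ((k : ℝ) + 1) * α ≤ n :=
        (mul_le_of_le_one_right (by positivity) hα1).trans (by exact_mod_cast hkn)
      exact add_nonneg (ih k) (mul_nonneg (sub_nonneg.2 hcoeff) (ih (k + 1)))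
    · rw [genStirlingFull_eq_zero_of_lt hα0 hnk, mul_zero, add_zero]
      exact ih k

lemma genStirlingFull_pos {α : ℝ} (hα0 : α ≠ 0) (hα1 : α < 1) {n k : ℕ} (hk : 1 ≤ k)
    (hkn : k ≤ n) : 0 < genStirlingFull α n k := by
  induction n generalizing k with
  | zero => omega
  | succ n ih =>
    rcases hkn.eq_or_lt with rfl | hkn
    · rw [genStirlingFull_self hα0]; exact one_pos
    obtain ⟨k, rfl⟩ := Nat.exists_eq_add_one_of_ne_zero (by omega : k ≠ 0)
    have hkn : k + 1 ≤ n := by omega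
    have hcoeff : ((k : ℝ) + 1) * α < n :=
      (mul_lt_of_lt_one_right (by positivity) hα1).trans_le (by exact_mod_cast hkn)
    rw [genStirlingFull_succ_succ hα0]
    exact add_pos_of_nonneg_of_pos (genStirlingFull_nonneg hα0 hα1.le n k)
      (mul_pos (sub_pos.2 hcoeff) (ih le_add_self hkn))

theorem genStirling_pos (n k : ℕ) (hk1 : 1 ≤ k) (hkn : k ≤ n)
    (α : ℝ) (hα : α ∈ Set.Ioo (0 : ℝ) 1) :
    0 < genStirling α n k := by
  rw [genStirling_eq_genStirlingFull α (by omega) k]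
  exact genStirlingFull_pos hα.1.ne' hα.2 hk1 hkn
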